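/- Let F be a field of characteristic 2 and let R be a finite-dimensional totally singular conic F-algebra with unique maximal ideal 𝔪 = {x ∈ R : x² = 0}, and set r = r_F(R/𝔪). If K is a maximal subfield of R containing F (a subalgebra of R that is a field and is maximal among field subalgebras containing F), then K is isomorphic as an F-algebra to the residue field R/𝔪; in particular any two maximal subfields of R containing F are F-isomorphic, dim_F K = dim_F(R/𝔪) = 2^r, and for every x ∈ R one has x² ∈ K² (i.e., x² is the square of an element of the image of K). -/

import Mathlib

/-!
Every `x` with `x ^ 2 ≠ 0` is a unit, because `x ^ 2` is a nonzero scalar; so `m` is the maximal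
ideal. A maximal subfield `K` maps isomorphically onto `R ⧸ m`: if some `t` were not congruent
to an element of `K`, then `K + K t` would contain no nonzero element of `m`, hence be a subfield
strictly containing `K`. In the residue field all squares lie in `F`, so adjoining an element of
a minimal generating set always doubles the dimension, which gives `2 ^ r`. Finally `x ≡ y mod m`
implies `x ^ 2 = y ^ 2`, since `(x - y) ^ 2 = x ^ 2 - y ^ 2` in characteristic 2.
-/

/-- The minimum rank of a finite-dimensional `F`-algebra `R`: the least cardinality of a
subset of `R` generating `R` as an `F`-algebra. -/
noncomputable def minRank (F R : Type*) [CommSemiring F] [Semiring R] [Algebra F R] : ℕ :=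
  sInf {n : ℕ | ∃ s : Finset R, s.card = n ∧ Algebra.adjoin F (s : Set R) = ⊤}

section MinRank

variable (F R : Type*) [CommSemiring F] [Semiring R] [Algebra F R]

theorem minRank_le_card {s : Finset R} (hs : Algebra.adjoin F (s : Set R) = ⊤) :
    minRank F R ≤ s.card :=
  Nat.sInf_le ⟨s, rfl, hs⟩

theorem exists_card_eq_minRank [Algebra.FiniteType F R] :
    ∃ s : Finset R, s.card = minRank F R ∧ Algebra.adjoin F (s : Set R) = ⊤ := by
  obtain ⟨s, hs⟩ := Algebra.FiniteType.out (R := F) (A := R)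
  exact Nat.sInf_mem
    (s := {n | ∃ s : Finset R, s.card = n ∧ Algebra.adjoin F (s : Set R) = ⊤}) ⟨_, s, rfl, hs⟩

variable {F R}

theorem notMem_adjoin_erase_of_card_eq_minRank [DecidableEq R] {s : Finset R}
    (hcard : s.card = minRank F R) (hs : Algebra.adjoin F (s : Set R) = ⊤) :
    ∀ x ∈ s, x ∉ Algebra.adjoin F ((s.erase x : Finset R) : Set R) := by
  intro x hx hmem
  have htop : Algebra.adjoin F ((s.erase x : Finset R) : Set R) = ⊤ := by
    rw [eq_top_iff, ← hs, Algebra.adjoin_le_iff]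
    intro y hy
    rcases eq_or_ne y x with rfl | hyx
    · exact hmem
    · exact Algebra.subset_adjoin (Finset.mem_erase.mpr ⟨hyx, hy⟩)
  have := minRank_le_card F R htop
  rw [Finset.card_erase_of_mem hx] at this
  have := Finset.card_pos.mpr ⟨x, hx⟩
  omega

end MinRank

namespace Subalgebra

variable {F A : Type*} [Field F] [CommRing A] [Algebra F A]

def adjoinSqrt (M : Subalgebra F A) (x : A) (hx : x ^ 2 ∈ M) : Subalgebra F A where
  carrier := {w | ∃ u ∈ M, ∃ v ∈ M, u + v * x = w}
  add_mem' := by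
    rintro _ _ ⟨u, hu, v, hv, rfl⟩ ⟨u', hu', v', hv', rfl⟩
    exact ⟨u + u', add_mem hu hu', v + v', add_mem hv hv', by ring⟩
  mul_mem' := by
    rintro _ _ ⟨u, hu, v, hv, rfl⟩ ⟨u', hu', v', hv', rfl⟩
    exact ⟨u * u' + v * v' * x ^ 2, add_mem (mul_mem hu hu') (mul_mem (mul_mem hv hv') hx),
      u * v' + u' * v, add_mem (mul_mem hu hv') (mul_mem hu' hv), by ring⟩
  algebraMap_mem' a := ⟨algebraMap F A a, M.algebraMap_mem a, 0, M.zero_mem, by ring⟩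

variable {M : Subalgebra F A} {x : A} {hx : x ^ 2 ∈ M}

theorem le_adjoinSqrt : M ≤ M.adjoinSqrt x hx :=
  fun u hu => ⟨u, hu, 0, M.zero_mem, by ring⟩

theorem self_mem_adjoinSqrt : x ∈ M.adjoinSqrt x hx :=
  ⟨0, M.zero_mem, 1, M.one_mem, by ring⟩

theorem adjoin_insert_eq_adjoinSqrt (s : Set A) (hx : x ^ 2 ∈ Algebra.adjoin F s) :
    Algebra.adjoin F (insert x s) = (Algebra.adjoin F s).adjoinSqrt x hx := by
  apply le_antisymm
  · rw [Algebra.adjoin_le_iff]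
    rintro y (rfl | hy)
    · exact self_mem_adjoinSqrt
    · exact le_adjoinSqrt (Algebra.subset_adjoin hy)
  · rintro _ ⟨u, hu, v, hv, rfl⟩
    have hle := Algebra.adjoin_mono (R := F) (Set.subset_insert x s)
    exact add_mem (hle hu) (mul_mem (hle hv) (Algebra.subset_adjoin (Set.mem_insert x s)))

theorem finrank_adjoinSqrt {L : Type*} [Field L] [Algebra F L] [FiniteDimensional F L]
    {M : Subalgebra F L} {x : L} (hx : x ^ 2 ∈ M) (hxM : x ∉ M) :
    Module.finrank F (M.adjoinSqrt x hx) = 2 * Module.finrank F M := by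
  let f : (M × M) →ₗ[F] L :=
    M.val.toLinearMap.coprod ((LinearMap.mulRight F x).comp M.val.toLinearMap)
  have hf : ∀ p : M × M, f p = p.1 + p.2 * x := fun _ => rfl
  have hinj : Function.Injective f := by
    rw [← LinearMap.ker_eq_bot, LinearMap.ker_eq_bot']
    rintro ⟨u, v⟩ h
    rw [hf] at h
    have hv : (v : L) = 0 := by
      by_contra hv0
      refine hxM ?_
      have hvinv := M.inv_mem_of_algebraic (Algebra.IsAlgebraic.isAlgebraic (v : L))
      have hxeq : x = -(u : L) * (v : L)⁻¹ := by
        field_simp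
        linear_combination h
      exact hxeq ▸ mul_mem (neg_mem u.2) hvinv
    rw [hv, zero_mul, add_zero] at h
    exact Prod.ext (Subtype.ext h) (Subtype.ext hv)
  have hrange : LinearMap.range f = Subalgebra.toSubmodule (M.adjoinSqrt x hx) := by
    ext w
    constructor
    · rintro ⟨⟨u, v⟩, rfl⟩
      exact ⟨u, u.2, v, v.2, rfl⟩
    · rintro ⟨u, hu, v, hv, rfl⟩
      exact ⟨(⟨u, hu⟩, ⟨v, hv⟩), rfl⟩
  have := LinearMap.finrank_range_of_inj hinj
  rwa [hrange, Module.finrank_prod, ← two_mul] at this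

end Subalgebra

def IsTotallySingularConic (F R : Type*) [CommSemiring F] [Semiring R] [Algebra F R] : Prop :=
  ∀ x : R, ∃ a : F, x ^ 2 = algebraMap F R a

namespace IsTotallySingularConic

section Basic

variable {F R : Type*} [Field F] [CommRing R] [Algebra F R] (hR : IsTotallySingularConic F R)
include hR

theorem sq_mem (S : Subalgebra F R) (x : R) : x ^ 2 ∈ S := by
  obtain ⟨a, ha⟩ := hR x
  exact ha ▸ S.algebraMap_mem a

theorem of_surjective {S : Type*} [CommRing S] [Algebra F S] (f : R →ₐ[F] S)
    (hf : Function.Surjective f) : IsTotallySingularConic F S := by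
  intro y
  obtain ⟨x, rfl⟩ := hf y
  obtain ⟨a, ha⟩ := hR x
  exact ⟨a, by rw [← map_pow, ha, AlgHom.commutes]⟩

theorem exists_mul_eq_one_mem {x : R} (hx : x ^ 2 ≠ 0) (S : Subalgebra F R) (hxS : x ∈ S) :
    ∃ y ∈ S, x * y = 1 := by
  obtain ⟨a, ha⟩ := hR x
  have ha0 : a ≠ 0 := by rintro rfl; exact hx (by rw [ha, map_zero])
  refine ⟨x * algebraMap F R a⁻¹, mul_mem hxS (S.algebraMap_mem _), ?_⟩
  rw [← mul_assoc, ← pow_two, ha, ← map_mul, mul_inv_cancel₀ ha0, map_one]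

theorem isUnit_of_sq_ne_zero {x : R} (hx : x ^ 2 ≠ 0) : IsUnit x := by
  obtain ⟨y, -, hy⟩ := hR.exists_mul_eq_one_mem hx ⊤ Algebra.mem_top
  exact .of_mul_eq_one y hy

theorem isField_of_sq_eq_zero_imp_eq_zero [Nontrivial R] (S : Subalgebra F R)
    (hS : ∀ w ∈ S, w ^ 2 = 0 → w = 0) : IsField S where
  exists_pair_ne := exists_pair_ne S
  mul_comm := mul_comm
  mul_inv_cancel {w} hw0 := by
    have hw : (w : R) ^ 2 ≠ 0 := fun h => hw0 (Subtype.ext (hS w w.2 h))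
    obtain ⟨y, hyS, hy⟩ := hR.exists_mul_eq_one_mem hw S w.2
    exact ⟨⟨y, hyS⟩, Subtype.ext hy⟩

theorem isMaximal [Nontrivial R] {m : Ideal R} (hm : ∀ x : R, x ∈ m ↔ x ^ 2 = 0) :
    m.IsMaximal := by
  refine Ideal.isMaximal_iff.mpr ⟨fun h => ?_, fun J x _ hxm hxJ => ?_⟩
  · exact one_ne_zero ((one_pow 2).symm.trans ((hm 1).mp h))
  · have hunit := hR.isUnit_of_sq_ne_zero (mt (hm x).mpr hxm)
    exact (Ideal.eq_top_iff_one J).mp (Ideal.eq_top_of_isUnit_mem J hxJ hunit)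

theorem bijective_mk_comp_val [Nontrivial R] {m : Ideal R} (hm : ∀ x : R, x ∈ m ↔ x ^ 2 = 0)
    {K : Subalgebra F R} (hKfield : IsField K)
    (hKmax : ∀ K' : Subalgebra F R, IsField K' → K ≤ K' → K = K') :
    Function.Bijective ((Ideal.Quotient.mkₐ F m).comp K.val) := by
  let : Field K := hKfield.toField
  have : Nontrivial (R ⧸ m) := Ideal.Quotient.nontrivial_iff.mpr (hR.isMaximal hm).ne_top
  refine ⟨RingHom.injective ((Ideal.Quotient.mkₐ F m).comp K.val : K →+* R ⧸ m), fun z => ?_⟩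
  obtain ⟨t, rfl⟩ := Ideal.Quotient.mkₐ_surjective F m z
  by_contra ht
  have ht2 := hR.sq_mem K t
  suffices hfield : IsField (K.adjoinSqrt t ht2) by
    have hK : K = K.adjoinSqrt t ht2 := hKmax _ hfield Subalgebra.le_adjoinSqrt
    exact ht ⟨⟨t, hK ▸ Subalgebra.self_mem_adjoinSqrt⟩, rfl⟩
  refine hR.isField_of_sq_eq_zero_imp_eq_zero _ ?_
  rintro _ ⟨u, hu, v, hv, rfl⟩ hw
  have hmem : u + v * t ∈ m := (hm _).mpr hw
  obtain rfl : v = 0 := by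
    by_contra hv0
    have hvK : (⟨v, hv⟩ : K) ≠ 0 := fun h => hv0 (congrArg Subtype.val h)
    obtain ⟨w, hw⟩ := hKfield.mul_inv_cancel hvK
    have hwv : v * (w : R) = 1 := congrArg Subtype.val hw
    refine ht ⟨-(w * ⟨u, hu⟩), Ideal.Quotient.eq.mpr ?_⟩
    have heq : ((-(w * ⟨u, hu⟩) : K) : R) - t = -((w : R) * (u + v * t)) := by
      push_cast
      linear_combination t * hwv
    exact heq ▸ neg_mem (m.mul_mem_left _ hmem)
  rw [zero_mul, add_zero] at hw ⊢
  have : (⟨u, hu⟩ : K) ^ 2 = 0 := Subtype.ext hw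
  exact congrArg Subtype.val (pow_eq_zero_iff two_ne_zero |>.mp this)

end Basic

section ResidueField

variable {F L : Type*} [Field F] [Field L] [Algebra F L] (hL : IsTotallySingularConic F L)
include hL

theorem finrank_adjoin [FiniteDimensional F L] [DecidableEq L] (s : Finset L)
    (hind : ∀ x ∈ s, x ∉ Algebra.adjoin F ((s.erase x : Finset L) : Set L)) :
    Module.finrank F (Algebra.adjoin F (s : Set L)) = 2 ^ s.card := by
  induction s using Finset.induction_on with
  | empty => simp
  | @insert a s ha ih =>
    have haS : a ∉ Algebra.adjoin F (s : Set L) := by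
      simpa [Finset.erase_insert ha] using hind a (Finset.mem_insert_self a s)
    have hind' : ∀ x ∈ s, x ∉ Algebra.adjoin F ((s.erase x : Finset L) : Set L) :=
      fun x hxs hmem => hind x (Finset.mem_insert_of_mem hxs) <| Algebra.adjoin_mono
        (Finset.coe_subset.mpr (Finset.erase_subset_erase x (Finset.subset_insert a s))) hmem
    rw [Finset.coe_insert, Subalgebra.adjoin_insert_eq_adjoinSqrt _ (hL.sq_mem _ a),
      Subalgebra.finrank_adjoinSqrt _ haS, ih hind', Finset.card_insert_of_notMem ha, pow_succ,
      mul_comm]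

theorem finrank_eq_two_pow_minRank [FiniteDimensional F L] :
    Module.finrank F L = 2 ^ minRank F L := by
  classical
  obtain ⟨s, hcard, htop⟩ := exists_card_eq_minRank F L
  rw [← hcard, ← hL.finrank_adjoin s (notMem_adjoin_erase_of_card_eq_minRank hcard htop), htop]
  exact Subalgebra.topEquiv.toLinearEquiv.finrank_eq.symm

end ResidueField

end IsTotallySingularConic

theorem sq_eq_sq_of_sq_sub_eq_zero {R : Type*} [CommRing R] [CharP R 2] {x y : R}
    (h : (y - x) ^ 2 = 0) : y ^ 2 = x ^ 2 := by
  rwa [CharTwo.sub_eq_add, CharTwo.add_sq, CharTwo.add_eq_zero] at h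

theorem stmt_2_general (F R : Type*) [Field F] [CharP F 2] [CommRing R] [Algebra F R]
    [FiniteDimensional F R]
    (hconic : ∀ x : R, ∃ a : F, x ^ 2 = algebraMap F R a)
    -- `m` is the maximal ideal of `R`, with underlying set `{x : R | x ^ 2 = 0}`
    (m : Ideal R) (hm : ∀ x : R, x ∈ m ↔ x ^ 2 = 0)
    -- `K` is a maximal subfield of `R` containing `F`
    (K : Subalgebra F R) (hKfield : IsField K)
    (hKmax : ∀ K' : Subalgebra F R, IsField K' → K ≤ K' → K = K') :
    Nonempty (K ≃ₐ[F] R ⧸ m) ∧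
    (∀ K' : Subalgebra F R, IsField K' →
      (∀ K'' : Subalgebra F R, IsField K'' → K' ≤ K'' → K' = K'') →
      Nonempty (K ≃ₐ[F] K')) ∧
    Module.finrank F K = Module.finrank F (R ⧸ m) ∧
    Module.finrank F K = 2 ^ minRank F (R ⧸ m) ∧
    (∀ x : R, ∃ y : K, x ^ 2 = (y : R) ^ 2) := by
  have hR : IsTotallySingularConic F R := hconic
  have : Nontrivial K := hKfield.nontrivial
  have : Nontrivial R := Subtype.val_injective.nontrivial (f := K.val)
  have := hR.isMaximal hm
  let := Ideal.Quotient.field m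
  have e : ∀ K' : Subalgebra F R, IsField K' →
      (∀ K'' : Subalgebra F R, IsField K'' → K' ≤ K'' → K' = K'') → K' ≃ₐ[F] R ⧸ m :=
    fun K' hK' hK'max => AlgEquiv.ofBijective _ (hR.bijective_mk_comp_val hm hK' hK'max)
  have hrank : Module.finrank F K = Module.finrank F (R ⧸ m) :=
    (e K hKfield hKmax).toLinearEquiv.finrank_eq
  have hres : IsTotallySingularConic F (R ⧸ m) :=
    hR.of_surjective _ (Ideal.Quotient.mkₐ_surjective F m)
  refine ⟨⟨e K hKfield hKmax⟩,
    fun K' hK' hK'max => ⟨(e K hKfield hKmax).trans (e K' hK' hK'max).symm⟩,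
    hrank, hrank ▸ hres.finrank_eq_two_pow_minRank, fun x => ?_⟩
  have := charP_of_injective_algebraMap (algebraMap F R).injective 2
  obtain ⟨y, hy⟩ := (hR.bijective_mk_comp_val hm hKfield hKmax).2 (Ideal.Quotient.mk m x)
  exact ⟨y, (sq_eq_sq_of_sq_sub_eq_zero ((hm _).mp (Ideal.Quotient.eq.mp hy))).symm⟩

theorem stmt_2 (F R : Type*) [Field F] [CharP F 2] [CommRing R] [Algebra F R]
    [FiniteDimensional F R] [Nontrivial R]
    (hconic : ∀ x : R, ∃ a : F, x ^ 2 = algebraMap F R a)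
    -- `m` is the maximal ideal of `R`, with underlying set `{x : R | x ^ 2 = 0}`
    (m : Ideal R) (hm : ∀ x : R, x ∈ m ↔ x ^ 2 = 0)
    -- `K` is a maximal subfield of `R` containing `F`
    (K : Subalgebra F R) (hKfield : IsField K)
    (hKmax : ∀ K' : Subalgebra F R, IsField K' → K ≤ K' → K = K') :
    Nonempty (K ≃ₐ[F] R ⧸ m) ∧
    (∀ K' : Subalgebra F R, IsField K' →
      (∀ K'' : Subalgebra F R, IsField K'' → K' ≤ K'' → K' = K'') →
      Nonempty (K ≃ₐ[F] K')) ∧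
    Module.finrank F K = Module.finrank F (R ⧸ m) ∧
    Module.finrank F K = 2 ^ minRank F (R ⧸ m) ∧
    (∀ x : R, ∃ y : K, x ^ 2 = (y : R) ^ 2) :=
  stmt_2_general F R hconic m hm K hKfield hKmax
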